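/- arXiv:2511.07145 — 2 statements merged into one kernel-verified Lean document; each statement's English description precedes it below -/
import Mathlib

section
/- Let p̂ be the empirical distribution of n i.i.d. samples from a distribution p over a finite set of k elements. Then for every t > 0, Pr(‖p̂ − p‖₁ ≥ t) ≤ 2^k · exp(−n t² / 2). -/
open scoped BigOperators
open MeasureTheory ProbabilityTheory Classical

/-!
Since `p̂` and `p` both have total mass one, `‖p̂ − p‖₁ = 2 (p̂(A) − p(A))` for
`A = {x | p x ≤ p̂ x}`. Hence the event `‖p̂ − p‖₁ ≥ t` is covered by the `2^k` events
`p̂(A) − p(A) ≥ t / 2`, `A ⊆ ι`, and each of them is a deviation of the mean of `n` independent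
indicators `1_A(X i)`, of probability at most `exp (−n t² / 2)` by Hoeffding's inequality.
-/

open Finset Real

section Hoeffding

variable {Ω ι : Type*} {mΩ : MeasurableSpace Ω} {μ : Measure Ω} [IsProbabilityMeasure μ]

theorem measureReal_sum_sub_integral_ge_le_of_mem_Icc {Y : ι → Ω → ℝ} (h_indep : iIndepFun Y μ)
    (h_meas : ∀ i, AEMeasurable (Y i) μ) {a b : ℝ} (h_bdd : ∀ i, ∀ᵐ ω ∂μ, Y i ω ∈ Set.Icc a b)
    (s : Finset ι) {ε : ℝ} (hε : 0 ≤ ε) :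
    μ.real {ω | ε ≤ ∑ i ∈ s, (Y i ω - μ[Y i])} ≤ exp (-2 * ε ^ 2 / (#s * (b - a) ^ 2)) := by
  have h_indep' : iIndepFun (fun i ω => Y i ω - μ[Y i]) μ := by
    exact h_indep.comp (fun i (y : ℝ) => y - μ[Y i]) fun _ => measurable_id.sub_const _
  refine (HasSubgaussianMGF.measure_sum_ge_le_of_iIndepFun h_indep'
    (fun i _ => hasSubgaussianMGF_of_mem_Icc (h_meas i) (h_bdd i)) hε).trans_eq ?_
  congr 1
  simp only [sum_const, nsmul_eq_mul, NNReal.coe_mul, NNReal.coe_natCast, NNReal.coe_pow,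
    NNReal.coe_div, coe_nnnorm, Real.norm_eq_abs, NNReal.coe_ofNat, div_pow, sq_abs]
  field_simp

theorem measureReal_sum_indicator_sub_ge_le {α : Type*} [MeasurableSpace α] {X : ι → Ω → α}
    (h_meas : ∀ i, Measurable (X i)) (h_indep : iIndepFun X μ) {A : Set α} (hA : MeasurableSet A)
    (s : Finset ι) {ε : ℝ} (hε : 0 ≤ ε) :
    μ.real {ω | ε ≤ ∑ i ∈ s, (A.indicator 1 (X i ω) - μ.real (X i ⁻¹' A))} ≤
      exp (-2 * ε ^ 2 / #s) := by
  have h_ind_meas : Measurable (A.indicator (1 : α → ℝ)) := measurable_one.indicator hA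
  have h_mean (i : ι) : μ[fun ω => A.indicator (1 : α → ℝ) (X i ω)] = μ.real (X i ⁻¹' A) := by
    rw [← integral_indicator_one (hA.preimage (h_meas i))]
    rfl
  have := measureReal_sum_sub_integral_ge_le_of_mem_Icc (a := 0) (b := 1)
    (h_indep.comp (fun _ => A.indicator 1) fun _ => h_ind_meas)
    (fun i => (h_ind_meas.comp (h_meas i)).aemeasurable)
    (fun i => ae_of_all _ fun ω => by
      by_cases h : X i ω ∈ A <;> simp [h]) s hε
  simpa [h_mean] using this

end Hoeffding

theorem sum_abs_sub_eq_two_mul_sum_filter {R κ : Type*} [CommRing R] [LinearOrder R]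
    [IsStrictOrderedRing R] (s : Finset κ) {f g : κ → R} (h : ∑ x ∈ s, f x = ∑ x ∈ s, g x) :
    ∑ x ∈ s, |f x - g x| = 2 * ∑ x ∈ s with g x ≤ f x, (f x - g x) := by
  have h_zero :
      ∑ x ∈ s with g x ≤ f x, (f x - g x) + ∑ x ∈ s with ¬g x ≤ f x, (f x - g x) = 0 := by
    rw [sum_filter_add_sum_filter_not, sum_sub_distrib, h, sub_self]
  have h_pos : ∑ x ∈ s with g x ≤ f x, |f x - g x| = ∑ x ∈ s with g x ≤ f x, (f x - g x) :=
    sum_congr rfl fun x hx => abs_of_nonneg (sub_nonneg.2 (mem_filter.1 hx).2)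
  have h_neg : ∑ x ∈ s with ¬g x ≤ f x, |f x - g x| = -∑ x ∈ s with ¬g x ≤ f x, (f x - g x) := by
    rw [← sum_neg_distrib]
    exact sum_congr rfl fun x hx => abs_of_neg (sub_neg.2 (not_le.1 (mem_filter.1 hx).2))
  rw [← sum_filter_add_sum_filter_not s (fun x => g x ≤ f x), h_pos, h_neg]
  linear_combination (-1 : R) * h_zero

section Empirical

variable {Ω ι : Type*} {n : ℕ}

noncomputable def empiricalFreq (X : Fin n → Ω → ι) (ω : Ω) (x : ι) : ℝ := #{i | X i ω = x} / n

theorem mul_sum_empiricalFreq (X : Fin n → Ω → ι) (ω : Ω) (A : Finset ι) :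
    n * ∑ x ∈ A, empiricalFreq X ω x = ∑ i, (A : Set ι).indicator 1 (X i ω) := by
  rcases n.eq_zero_or_pos with rfl | hn
  · simp
  simp only [empiricalFreq, ← sum_div, Set.indicator_apply, mem_coe, Pi.one_apply, sum_boole]
  rw [mul_div_cancel₀ _ (by positivity)]
  exact_mod_cast sum_card_fiberwise_eq_card_filter _ _ _

theorem sum_empiricalFreq [Fintype ι] (hn : 0 < n) (X : Fin n → Ω → ι) (ω : Ω) :
    ∑ x, empiricalFreq X ω x = 1 := by
  have h := mul_sum_empiricalFreq X ω univ
  simp only [coe_univ, Set.indicator_univ, Pi.one_apply, sum_const, card_univ, Fintype.card_fin,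
    nsmul_eq_mul, mul_one] at h
  exact (mul_eq_left₀ (by positivity)).1 h

theorem exists_finset_mul_sum_abs_empiricalFreq_sub_eq [Fintype ι] (hn : 0 < n)
    (X : Fin n → Ω → ι) (ω : Ω) {p : ι → ℝ} (hp : ∑ x, p x = 1) :
    ∃ A : Finset ι, n * (∑ x, |empiricalFreq X ω x - p x|) / 2 =
      ∑ i, ((A : Set ι).indicator 1 (X i ω) - ∑ x ∈ A, p x) := by
  refine ⟨({x | p x ≤ empiricalFreq X ω x} : Finset ι), ?_⟩
  rw [sum_abs_sub_eq_two_mul_sum_filter _ ((sum_empiricalFreq hn X ω).trans hp.symm),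
    sum_sub_distrib, sum_sub_distrib, ← mul_sum_empiricalFreq, sum_const, card_univ,
    Fintype.card_fin, nsmul_eq_mul]
  ring

end Empirical

/-- Bretagnolle–Huber–Carol inequality: if p̂ is the empirical distribution of n i.i.d.
    samples from a distribution p over a finite set of k elements, then for every t > 0,
    Pr(‖p̂ − p‖₁ ≥ t) ≤ 2^k · exp(−n t²/2). -/
theorem bretagnolle_huber_carol
    {Ω : Type*} [MeasurableSpace Ω] (μ : Measure Ω) [IsProbabilityMeasure μ]
    {ι : Type*} [Fintype ι] [mι : MeasurableSpace ι] [MeasurableSingletonClass ι]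
    (n : ℕ) (hn : 0 < n)
    (X : Fin n → Ω → ι) (hmeas : ∀ i, Measurable (X i))
    (hindep : iIndepFun (m := fun _ => mι) X μ)
    (p : ι → ℝ)
    (hid : ∀ i x, (μ {ω | X i ω = x}).toReal = p x)
    (t : ℝ) (ht : 0 < t) :
    (μ {ω | t ≤ ∑ x, |((Finset.univ.filter fun i => X i ω = x).card : ℝ) / n - p x|}).toReal
      ≤ 2 ^ (Fintype.card ι) * Real.exp (-(n : ℝ) * t ^ 2 / 2) := by
  have h_mass (i : Fin n) (A : Finset ι) : μ.real (X i ⁻¹' A) = ∑ x ∈ A, p x := by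
    rw [← sum_measureReal_preimage_singleton A fun x _ => hmeas i (measurableSet_singleton x)]
    exact sum_congr rfl fun x _ => hid i x
  have hp : ∑ x, p x = 1 := by simpa using (h_mass ⟨0, hn⟩ univ).symm
  let E (A : Finset ι) : Set Ω :=
    {ω | n * t / 2 ≤ ∑ i, ((A : Set ι).indicator 1 (X i ω) - μ.real (X i ⁻¹' A))}
  have h_cover : {ω | t ≤ ∑ x, |empiricalFreq X ω x - p x|} ⊆ ⋃ A ∈ univ.powerset, E A := by
    intro ω hω
    obtain ⟨A, hA⟩ := exists_finset_mul_sum_abs_empiricalFreq_sub_eq hn X ω hp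
    refine Set.mem_biUnion (mem_powerset.2 (subset_univ A)) ?_
    simp only [E, Set.mem_ofPred_eq, h_mass, ← hA]
    gcongr
    exact hω
  calc μ.real {ω | t ≤ ∑ x, |empiricalFreq X ω x - p x|}
      ≤ ∑ A ∈ univ.powerset, μ.real (E A) :=
        (measureReal_mono h_cover (measure_ne_top _ _)).trans (measureReal_biUnion_finset_le _ _)
    _ ≤ ∑ A ∈ univ.powerset, exp (-(n : ℝ) * t ^ 2 / 2) := by
        refine sum_le_sum fun A _ => (measureReal_sum_indicator_sub_ge_le hmeas hindep
          A.measurableSet univ (by positivity)).trans_eq ?_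
        congr 1
        field_simp
        simp [hn.ne']
    _ = 2 ^ Fintype.card ι * exp (-(n : ℝ) * t ^ 2 / 2) := by simp
end

section
/- For probability vectors P, Q on a finite set, √JS defines a metric: it is symmetric, vanishes iff P = Q, and satisfies the triangle inequality √JS(P,R) ≤ √JS(P,Q) + √JS(Q,R). -/
open scoped BigOperators

def IsProbVec {ι : Type*} [Fintype ι] (P : ι → ℝ) : Prop :=
  (∀ x, 0 ≤ P x) ∧ ∑ x, P x = 1

noncomputable def klDiv {ι : Type*} [Fintype ι] (P Q : ι → ℝ) : ℝ :=
  ∑ x, P x * Real.log (P x / Q x)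

noncomputable def jsDiv {ι : Type*} [Fintype ι] (P Q : ι → ℝ) : ℝ :=
  (1/2) * klDiv P (fun x => (P x + Q x) / 2) + (1/2) * klDiv Q (fun x => (P x + Q x) / 2)

/-! Write `JS(P, Q) = ½ ∑ₓ L(Pₓ, Qₓ)` with `L = jsTerm`, i.e.
`L(a, b) = a log a + b log b - (a + b) log ((a + b) / 2)`. By Minkowski's inequality in `ℝ^ι`
it suffices that `√L` satisfies the triangle inequality on `[0, ∞)`. Differentiating in `t`
gives `L(a, b) = ∫₀^∞ t ρ(a + t, b + t) dt` with `ρ(A, B) = jsRate A B = (A - B)² / (A B (A + B))`,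
and `√ρ` satisfies the triangle inequality on `(0, ∞)` by an explicit polynomial identity.
Minkowski's inequality for this integral then gives it for `√L`.
-/

open MeasureTheory Real Set Filter Topology

lemma add_sq_le_mul_sq_add_mul_sq (u v : ℝ) {r : ℝ} (hr : 0 < r) :
    (u + v) ^ 2 ≤ (1 + r) * u ^ 2 + (1 + r⁻¹) * v ^ 2 := by
  have h : 0 ≤ (r * u - v) ^ 2 / r := by positivity
  have e : (1 + r) * u ^ 2 + (1 + r⁻¹) * v ^ 2 - (u + v) ^ 2 = (r * u - v) ^ 2 / r := by
    field_simp
    ring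
  linarith

lemma le_sqrt_add_sqrt_sq_of_sq_le {x y z : ℝ} (hx : 0 ≤ x) (hy : 0 ≤ y)
    (h : (x + y - z) ^ 2 ≤ 4 * x * y) : z ≤ (√x + √y) ^ 2 := by
  have key : (x + y - z) ^ 2 ≤ (2 * (√x * √y)) ^ 2 := by
    rw [mul_pow, mul_pow, sq_sqrt hx, sq_sqrt hy]
    linarith
  have := (abs_le_of_sq_le_sq' key (by positivity)).1
  nlinarith [sq_sqrt hx, sq_sqrt hy]

lemma sqrt_integral_le_add {α : Type*} [MeasurableSpace α] {μ : Measure α} {f g h : α → ℝ}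
    (hf : Integrable f μ) (hg : Integrable g μ) (hh : Integrable h μ)
    (hg0 : 0 ≤ᵐ[μ] g) (hh0 : 0 ≤ᵐ[μ] h) (hfgh : ∀ᵐ t ∂μ, f t ≤ (√(g t) + √(h t)) ^ 2)
    (hG : 0 < ∫ t, g t ∂μ) (hH : 0 < ∫ t, h t ∂μ) :
    √(∫ t, f t ∂μ) ≤ √(∫ t, g t ∂μ) + √(∫ t, h t ∂μ) := by
  -- the weight minimising `(1 + r) G + (1 + r⁻¹) H`
  set r := √(∫ t, h t ∂μ) / √(∫ t, g t ∂μ)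
  have hr : 0 < r := by positivity
  have hpoint : ∀ᵐ t ∂μ, f t ≤ (1 + r) * g t + (1 + r⁻¹) * h t := by
    filter_upwards [hg0, hh0, hfgh] with t hgt hht hft
    simpa only [sq_sqrt hgt, sq_sqrt hht] using hft.trans (add_sq_le_mul_sq_add_mul_sq _ _ hr)
  have hint : ∫ t, f t ∂μ ≤ (1 + r) * ∫ t, g t ∂μ + (1 + r⁻¹) * ∫ t, h t ∂μ := by
    calc ∫ t, f t ∂μ ≤ ∫ t, ((1 + r) * g t + (1 + r⁻¹) * h t) ∂μ :=
          integral_mono_ae hf ((hg.const_mul _).add (hh.const_mul _)) hpoint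
      _ = _ := by
          rw [integral_add (hg.const_mul _) (hh.const_mul _), integral_const_mul,
            integral_const_mul]
  have hopt : (1 + r) * ∫ t, g t ∂μ + (1 + r⁻¹) * ∫ t, h t ∂μ
      = (√(∫ t, g t ∂μ) + √(∫ t, h t ∂μ)) ^ 2 := by
    have hG' : 0 < √(∫ t, g t ∂μ) := sqrt_pos.2 hG
    have hH' : 0 < √(∫ t, h t ∂μ) := sqrt_pos.2 hH
    have key : ∀ a b : ℝ, 0 < a → 0 < b →
        (1 + b / a) * a ^ 2 + (1 + (b / a)⁻¹) * b ^ 2 = (a + b) ^ 2 := by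
      intro a b ha hb
      field_simp
      ring
    simpa only [sq_sqrt hG.le, sq_sqrt hH.le] using key _ _ hG' hH'
  exact sqrt_le_iff.2 ⟨by positivity, hopt ▸ hint⟩

lemma sqrt_sum_le_add {ι : Type*} [Fintype ι] {f g h : ι → ℝ} (hg : ∀ x, 0 ≤ g x)
    (hh : ∀ x, 0 ≤ h x) (hfgh : ∀ x, f x ≤ (√(g x) + √(h x)) ^ 2) :
    √(∑ x, f x) ≤ √(∑ x, g x) + √(∑ x, h x) := by
  let u : EuclideanSpace ℝ ι := WithLp.toLp 2 fun x => √(g x)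
  let v : EuclideanSpace ℝ ι := WithLp.toLp 2 fun x => √(h x)
  have norm_eq : ∀ k : ι → ℝ, (∀ x, 0 ≤ k x) →
      ‖(WithLp.toLp 2 fun x => √(k x) : EuclideanSpace ℝ ι)‖ = √(∑ x, k x) := fun k hk => by
    simp [EuclideanSpace.norm_eq, sq_sqrt (hk _)]
  calc √(∑ x, f x) ≤ √(∑ x, (√(g x) + √(h x)) ^ 2) :=
        sqrt_le_sqrt (Finset.sum_le_sum fun x _ => hfgh x)
    _ = ‖u + v‖ := by simp [u, v, EuclideanSpace.norm_eq]
    _ ≤ ‖u‖ + ‖v‖ := norm_add_le u v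
    _ = √(∑ x, g x) + √(∑ x, h x) := by rw [norm_eq g hg, norm_eq h hh]

noncomputable def jsRate (A B : ℝ) : ℝ := (A - B) ^ 2 / (A * B * (A + B))

lemma jsRate_nonneg {A B : ℝ} (hA : 0 < A) (hB : 0 < B) : 0 ≤ jsRate A B := by
  unfold jsRate
  positivity

lemma jsRate_le_sqrt_add_sqrt_sq {A B C : ℝ} (hA : 0 < A) (hB : 0 < B) (hC : 0 < C) :
    jsRate A C ≤ (√(jsRate A B) + √(jsRate B C)) ^ 2 := by
  refine le_sqrt_add_sqrt_sq_of_sq_le (jsRate_nonneg hA hB) (jsRate_nonneg hB hC) ?_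
  have key : 4 * jsRate A B * jsRate B C - (jsRate A B + jsRate B C - jsRate A C) ^ 2
      = 4 * B * (A + B + C) * ((A - B) * (B - C) * (A - C)) ^ 2
        / (A * C * B ^ 2 * ((A + B) * (B + C) * (A + C)) ^ 2) := by
    unfold jsRate
    field_simp
    ring
  have : 0 ≤ 4 * B * (A + B + C) * ((A - B) * (B - C) * (A - C)) ^ 2
      / (A * C * B ^ 2 * ((A + B) * (B + C) * (A + C)) ^ 2) := by
    positivity
  linarith

noncomputable def jsDensity (a b t : ℝ) : ℝ := t * jsRate (a + t) (b + t)

lemma jsDensity_nonneg {a b t : ℝ} (ha : 0 ≤ a) (hb : 0 ≤ b) (ht : 0 < t) :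
    0 ≤ jsDensity a b t :=
  mul_nonneg ht.le (jsRate_nonneg (by linarith) (by linarith))

lemma jsDensity_le_sqrt_add_sqrt_sq {a b c t : ℝ} (ha : 0 ≤ a) (hb : 0 ≤ b) (hc : 0 ≤ c)
    (ht : 0 < t) :
    jsDensity a c t ≤ (√(jsDensity a b t) + √(jsDensity b c t)) ^ 2 := by
  have h := jsRate_le_sqrt_add_sqrt_sq (B := b + t) (by linarith : 0 < a + t) (by linarith)
    (by linarith : 0 < c + t)
  have e : (√(jsDensity a b t) + √(jsDensity b c t)) ^ 2
      = t * (√(jsRate (a + t) (b + t)) + √(jsRate (b + t) (c + t))) ^ 2 := by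
    rw [jsDensity, jsDensity, sqrt_mul ht.le, sqrt_mul ht.le, ← mul_add, mul_pow, sq_sqrt ht.le]
  rw [e, jsDensity]
  exact mul_le_mul_of_nonneg_left h ht.le

noncomputable def jsAntideriv (a b t : ℝ) : ℝ :=
  (a + b) * log ((a + b) / 2 + t) - a * log (a + t) - b * log (b + t)

lemma hasDerivAt_jsAntideriv {a b t : ℝ} (ha : 0 ≤ a) (hb : 0 ≤ b) (ht : 0 < t) :
    HasDerivAt (jsAntideriv a b) (jsDensity a b t) t := by
  have hA : 0 < a + t := by linarith
  have hB : 0 < b + t := by linarith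
  have hM : 0 < (a + b) / 2 + t := by linarith
  have d := fun c : ℝ => (hasDerivAt_id' t).const_add c
  have := ((((d _).log hM.ne').const_mul (a + b)).sub (((d a).log hA.ne').const_mul a)).sub
    (((d b).log hB.ne').const_mul b)
  refine this.congr_deriv ?_
  unfold jsDensity jsRate
  field_simp
  ring

lemma continuousAt_mul_log_add (m : ℝ) : ContinuousAt (fun t => m * log (m + t)) 0 := by
  rcases eq_or_ne m 0 with rfl | hm
  · simpa using continuousAt_const
  · exact continuousAt_const.mul ((continuousAt_log (by simpa using hm)).comp
      (continuousAt_const.add continuousAt_id))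

lemma continuousAt_jsAntideriv (a b : ℝ) : ContinuousAt (jsAntideriv a b) 0 := by
  have := (((continuousAt_mul_log_add ((a + b) / 2)).const_mul 2).sub
    (continuousAt_mul_log_add a)).sub (continuousAt_mul_log_add b)
  convert this using 1
  funext t
  simp only [jsAntideriv, Pi.sub_apply]
  ring

lemma tendsto_log_add_div_add (c d : ℝ) :
    Tendsto (fun t => log ((c + t) / (d + t))) atTop (𝓝 0) := by
  have h : Tendsto (fun t => 1 + (c - d) / (d + t)) atTop (𝓝 1) := by
    simpa using tendsto_const_nhds.add
      (tendsto_const_nhds.div_atTop (tendsto_atTop_add_const_left _ d tendsto_id))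
  have := ((continuousAt_log one_ne_zero).tendsto.comp h)
  rw [log_one] at this
  refine this.congr' ?_
  filter_upwards [eventually_gt_atTop (-d)] with t ht
  have : d + t ≠ 0 := by linarith
  simp only [Function.comp_apply]
  congr 1
  field_simp
  ring

lemma tendsto_jsAntideriv_atTop {a b : ℝ} (ha : 0 ≤ a) (hb : 0 ≤ b) :
    Tendsto (jsAntideriv a b) atTop (𝓝 0) := by
  have := ((tendsto_log_add_div_add ((a + b) / 2) a).const_mul a).add
    ((tendsto_log_add_div_add ((a + b) / 2) b).const_mul b)
  rw [mul_zero, mul_zero, add_zero] at this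
  refine this.congr' ?_
  filter_upwards [eventually_gt_atTop 0] with t ht
  rw [jsAntideriv, log_div (by positivity) (by positivity), log_div (by positivity) (by positivity)]
  ring

noncomputable def jsTerm (a b : ℝ) : ℝ :=
  a * log a + b * log b - (a + b) * log ((a + b) / 2)

lemma jsTerm_comm (a b : ℝ) : jsTerm a b = jsTerm b a := by
  rw [jsTerm, jsTerm, add_comm b a]
  ring

lemma jsTerm_self (a : ℝ) : jsTerm a a = 0 := by
  rw [jsTerm, add_self_div_two]
  ring

lemma jsTerm_eq_two_mul_convexity_gap (a b : ℝ) :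
    jsTerm a b = 2 * ((1 / 2 : ℝ) • (a * log a) + (1 / 2 : ℝ) • (b * log b)
      - ((1 / 2 : ℝ) • a + (1 / 2 : ℝ) • b) * log ((1 / 2 : ℝ) • a + (1 / 2 : ℝ) • b)) := by
  simp only [jsTerm, smul_eq_mul]
  ring_nf

lemma jsTerm_nonneg {a b : ℝ} (ha : 0 ≤ a) (hb : 0 ≤ b) : 0 ≤ jsTerm a b := by
  have := convexOn_mul_log.2 (mem_Ici.2 ha) (mem_Ici.2 hb) (by norm_num : (0 : ℝ) ≤ 1 / 2)
    (by norm_num : (0 : ℝ) ≤ 1 / 2) (by norm_num)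
  rw [jsTerm_eq_two_mul_convexity_gap]
  linarith

lemma jsTerm_pos {a b : ℝ} (ha : 0 ≤ a) (hb : 0 ≤ b) (hab : a ≠ b) : 0 < jsTerm a b := by
  have := strictConvexOn_mul_log.2 (mem_Ici.2 ha) (mem_Ici.2 hb) hab
    (by norm_num : (0 : ℝ) < 1 / 2) (by norm_num : (0 : ℝ) < 1 / 2) (by norm_num)
  rw [jsTerm_eq_two_mul_convexity_gap]
  linarith

lemma jsTerm_eq_zero_iff {a b : ℝ} (ha : 0 ≤ a) (hb : 0 ≤ b) : jsTerm a b = 0 ↔ a = b :=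
  ⟨fun h => by_contra fun hab => (jsTerm_pos ha hb hab).ne' h, fun h => h ▸ jsTerm_self a⟩

lemma integrableOn_jsDensity {a b : ℝ} (ha : 0 ≤ a) (hb : 0 ≤ b) :
    IntegrableOn (jsDensity a b) (Ioi 0) :=
  integrableOn_Ioi_deriv_of_nonneg (continuousAt_jsAntideriv a b).continuousWithinAt
    (fun _ ht => hasDerivAt_jsAntideriv ha hb ht) (fun _ ht => jsDensity_nonneg ha hb ht)
    (tendsto_jsAntideriv_atTop ha hb)

lemma integral_jsDensity {a b : ℝ} (ha : 0 ≤ a) (hb : 0 ≤ b) :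
    ∫ t in Ioi 0, jsDensity a b t = jsTerm a b := by
  rw [integral_Ioi_of_hasDerivAt_of_nonneg (continuousAt_jsAntideriv a b).continuousWithinAt
    (fun _ ht => hasDerivAt_jsAntideriv ha hb ht) (fun _ ht => jsDensity_nonneg ha hb ht)
    (tendsto_jsAntideriv_atTop ha hb)]
  simp only [jsAntideriv, jsTerm, add_zero]
  ring

lemma sqrt_jsTerm_le_add {a b c : ℝ} (ha : 0 ≤ a) (hb : 0 ≤ b) (hc : 0 ≤ c) :
    √(jsTerm a c) ≤ √(jsTerm a b) + √(jsTerm b c) := by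
  rcases eq_or_ne a b with rfl | hab
  · simp [jsTerm_self]
  rcases eq_or_ne b c with rfl | hbc
  · simp [jsTerm_self]
  simp only [← integral_jsDensity ha hb, ← integral_jsDensity hb hc, ← integral_jsDensity ha hc]
  refine sqrt_integral_le_add (integrableOn_jsDensity ha hc) (integrableOn_jsDensity ha hb)
    (integrableOn_jsDensity hb hc) ?_ ?_ ?_ ?_ ?_
  · exact ae_restrict_of_forall_mem measurableSet_Ioi fun _ ht => jsDensity_nonneg ha hb ht
  · exact ae_restrict_of_forall_mem measurableSet_Ioi fun _ ht => jsDensity_nonneg hb hc ht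
  · exact ae_restrict_of_forall_mem measurableSet_Ioi fun _ ht =>
      jsDensity_le_sqrt_add_sqrt_sq ha hb hc ht
  · exact (integral_jsDensity ha hb).symm ▸ jsTerm_pos ha hb hab
  · exact (integral_jsDensity hb hc).symm ▸ jsTerm_pos hb hc hbc

section jsDiv

variable {ι : Type*} [Fintype ι]

lemma jsDiv_comm (P Q : ι → ℝ) : jsDiv P Q = jsDiv Q P := by
  simp only [jsDiv, add_comm (Q _) (P _)]
  ring

lemma jsDiv_eq_half_sum_jsTerm {P Q : ι → ℝ} (hP : ∀ x, 0 ≤ P x) (hQ : ∀ x, 0 ≤ Q x) :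
    jsDiv P Q = (1 / 2) * ∑ x, jsTerm (P x) (Q x) := by
  have hsplit : ∀ p q : ℝ, 0 ≤ p → 0 ≤ q →
      p * log (p / ((p + q) / 2)) = p * log p - p * log ((p + q) / 2) := fun p q hp hq => by
    rcases hp.eq_or_lt with rfl | hp
    · simp
    · rw [log_div hp.ne' (by positivity), mul_sub]
  rw [jsDiv, klDiv, klDiv, ← mul_add, ← Finset.sum_add_distrib]
  congr 1
  refine Finset.sum_congr rfl fun x _ => ?_
  rw [hsplit _ _ (hP x) (hQ x), add_comm (P x), hsplit _ _ (hQ x) (hP x), add_comm (Q x), jsTerm]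
  ring

lemma jsDiv_nonneg {P Q : ι → ℝ} (hP : ∀ x, 0 ≤ P x) (hQ : ∀ x, 0 ≤ Q x) : 0 ≤ jsDiv P Q := by
  rw [jsDiv_eq_half_sum_jsTerm hP hQ]
  exact mul_nonneg (by norm_num) (Finset.sum_nonneg fun x _ => jsTerm_nonneg (hP x) (hQ x))

lemma jsDiv_eq_zero_iff {P Q : ι → ℝ} (hP : ∀ x, 0 ≤ P x) (hQ : ∀ x, 0 ≤ Q x) :
    jsDiv P Q = 0 ↔ P = Q := by
  rw [jsDiv_eq_half_sum_jsTerm hP hQ, mul_eq_zero, or_iff_right (by norm_num),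
    Finset.sum_eq_zero_iff_of_nonneg fun x _ => jsTerm_nonneg (hP x) (hQ x), funext_iff]
  simp only [Finset.mem_univ, true_imp_iff, jsTerm_eq_zero_iff (hP _) (hQ _)]

lemma sqrt_jsDiv_le_add {P Q R : ι → ℝ} (hP : ∀ x, 0 ≤ P x) (hQ : ∀ x, 0 ≤ Q x)
    (hR : ∀ x, 0 ≤ R x) :
    √(jsDiv P R) ≤ √(jsDiv P Q) + √(jsDiv Q R) := by
  rw [jsDiv_eq_half_sum_jsTerm hP hR, jsDiv_eq_half_sum_jsTerm hP hQ,
    jsDiv_eq_half_sum_jsTerm hQ hR, sqrt_mul (by norm_num), sqrt_mul (by norm_num),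
    sqrt_mul (by norm_num), ← mul_add]
  refine mul_le_mul_of_nonneg_left (sqrt_sum_le_add (fun x => jsTerm_nonneg (hP x) (hQ x))
    (fun x => jsTerm_nonneg (hQ x) (hR x)) fun x => ?_) (sqrt_nonneg _)
  exact (sqrt_le_left (add_nonneg (sqrt_nonneg _) (sqrt_nonneg _))).1
    (sqrt_jsTerm_le_add (hP x) (hQ x) (hR x))

end jsDiv

/-- Endres–Schindelin: √JS is a metric on the probability vectors over a finite set:
    it is symmetric, vanishes iff the distributions coincide, and satisfies the
    triangle inequality. -/
theorem sqrt_js_is_metric {ι : Type*} [Fintype ι] :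
    (∀ P Q : ι → ℝ, IsProbVec P → IsProbVec Q →
      Real.sqrt (jsDiv P Q) = Real.sqrt (jsDiv Q P)) ∧
    (∀ P Q : ι → ℝ, IsProbVec P → IsProbVec Q →
      (Real.sqrt (jsDiv P Q) = 0 ↔ P = Q)) ∧
    (∀ P Q R : ι → ℝ, IsProbVec P → IsProbVec Q → IsProbVec R →
      Real.sqrt (jsDiv P R) ≤ Real.sqrt (jsDiv P Q) + Real.sqrt (jsDiv Q R)) :=
  ⟨fun P Q _ _ => by rw [jsDiv_comm],
    fun _ _ hP hQ => (sqrt_eq_zero (jsDiv_nonneg hP.1 hQ.1)).trans (jsDiv_eq_zero_iff hP.1 hQ.1),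
    fun _ _ _ hP hQ hR => sqrt_jsDiv_le_add hP.1 hQ.1 hR.1⟩
end
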